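/- arXiv:2512.10203 — 2 statements merged into one kernel-verified Lean document; each statement's English description precedes it below -/
import Mathlib

section
/- Let E be a real inner product space, X a metric space, U ⊆ X, and Z : E → X → E a map. Suppose there are constants L_Z > 0 and γ > 0 such that: (i) for all μ, ν ∈ U and all p ∈ E, ‖Z(p,μ) − Z(p,ν)‖ ≤ L_Z · dist(μ,ν); and (ii) for all μ ∈ U and all p, q ∈ E, ⟪Z(p,μ) − Z(q,μ), p − q⟫ ≤ −γ‖p − q‖². Then for any μ, ν ∈ U and any p, q ∈ E with Z(p,μ) = Z(q,ν), it holds that ‖p − q‖ ≤ (L_Z/γ) · dist(μ,ν). -/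
open scoped InnerProductSpace

theorem norm_le_div_of_mul_sq_le_inner {E : Type*} [NormedAddCommGroup E]
    [InnerProductSpace ℝ E] {v x : E} {γ : ℝ} (hγ : 0 < γ)
    (h : γ * ‖x‖ ^ 2 ≤ ⟪v, x⟫_ℝ) : ‖x‖ ≤ ‖v‖ / γ := by
  rw [le_div_iff₀' hγ]
  rcases (norm_nonneg x).eq_or_lt with hx | hx
  · rw [← hx, mul_zero]
    exact norm_nonneg v
  · refine le_of_mul_le_mul_right ?_ hx
    calc γ * ‖x‖ * ‖x‖ = γ * ‖x‖ ^ 2 := by ring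
      _ ≤ ⟪v, x⟫_ℝ := h
      _ ≤ ‖v‖ * ‖x‖ := real_inner_le_norm v x

theorem local_lipschitz_price_response_general
    {E X : Type*} [NormedAddCommGroup E] [InnerProductSpace ℝ E] [MetricSpace X]
    (U : Set X) (Z : E → X → E) (LZ γ : ℝ) (hγ : 0 < γ)
    (hLip : ∀ μ ∈ U, ∀ ν ∈ U, ∀ p : E, ‖Z p μ - Z p ν‖ ≤ LZ * dist μ ν)
    (hMono : ∀ μ ∈ U, ∀ p q : E, ⟪Z p μ - Z q μ, p - q⟫_ℝ ≤ -γ * ‖p - q‖ ^ 2) :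
    ∀ μ ∈ U, ∀ ν ∈ U, ∀ p q : E, Z p μ = Z q ν →
      ‖p - q‖ ≤ (LZ / γ) * dist μ ν := by
  intro μ hμ ν hν p q heq
  have hshift : Z q μ - Z q ν = -(Z p μ - Z q μ) := by
    rw [heq, neg_sub]
  have hinner : γ * ‖p - q‖ ^ 2 ≤ ⟪Z q μ - Z q ν, p - q⟫_ℝ := by
    rw [hshift, inner_neg_left]
    linarith [hMono μ hμ p q]
  calc ‖p - q‖ ≤ ‖Z q μ - Z q ν‖ / γ := norm_le_div_of_mul_sq_le_inner hγ hinner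
    _ ≤ LZ * dist μ ν / γ := by gcongr; exact hLip μ hμ ν hν q
    _ = (LZ / γ) * dist μ ν := by ring

/-- Local Lipschitz price response (Theorem 4): under local Lipschitzness of excess
demand in the distribution and local strong monotonicity in prices, equilibrium
prices respond Lipschitz-continuously to perturbations of the distribution. -/
theorem local_lipschitz_price_response
    {E X : Type*} [NormedAddCommGroup E] [InnerProductSpace ℝ E] [MetricSpace X]
    (U : Set X) (Z : E → X → E) (LZ γ : ℝ) (hLZ : 0 < LZ) (hγ : 0 < γ)
    (hLip : ∀ μ ∈ U, ∀ ν ∈ U, ∀ p : E, ‖Z p μ - Z p ν‖ ≤ LZ * dist μ ν)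
    (hMono : ∀ μ ∈ U, ∀ p q : E, ⟪Z p μ - Z q μ, p - q⟫_ℝ ≤ -γ * ‖p - q‖ ^ 2) :
    ∀ μ ∈ U, ∀ ν ∈ U, ∀ p q : E, Z p μ = Z q ν →
      ‖p - q‖ ≤ (LZ / γ) * dist μ ν :=
  local_lipschitz_price_response_general U Z LZ γ hγ hLip hMono
end

section
/- Let E be a real inner product space, X a metric space, U ⊆ X, and Z : E → X → E a map. Suppose there are constants L_Z > 0 and γ > 0 such that: (i) for all μ, ν ∈ U and all p ∈ E, ‖Z(p,μ) − Z(p,ν)‖ ≤ L_Z · dist(μ,ν); and (ii) for all μ ∈ U and all p, q ∈ E, ⟪Z(p,μ) − Z(q,μ), p − q⟫ ≤ −γ‖p − q‖². Let W : E → ℝ satisfy |W(p) − W(q)| ≤ L‖p − q‖ for all p, q ∈ E, for some constant L > 0. Then for any μ, ν ∈ U and any p, q ∈ E with Z(p,μ) = Z(q,ν), it holds that W(q) − W(p) ≤ (L·L_Z/γ) · dist(μ,ν). -/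
open scoped InnerProductSpace

/-!
Strong monotonicity of `-Z(·, μ)` with modulus `γ` gives `γ‖p - q‖ ≤ ‖Z(p, μ) - Z(q, μ)‖`
(Cauchy–Schwarz). If `Z(p, μ) = Z(q, ν)`, the right side equals `‖Z(q, ν) - Z(q, μ)‖ ≤ L_Z · dist(μ, ν)`,
so equilibrium prices move by at most `(L_Z / γ) · dist(μ, ν)`, and `W` turns this into a welfare
change of at most `L` times that.
-/

section InnerProductSpace

variable {E : Type*} [NormedAddCommGroup E] [InnerProductSpace ℝ E]

theorem mul_norm_sub_le_norm_sub_of_inner_le_neg {F : E → E} {γ : ℝ}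
    (hF : ∀ p q : E, ⟪F p - F q, p - q⟫_ℝ ≤ -γ * ‖p - q‖ ^ 2) (p q : E) :
    γ * ‖p - q‖ ≤ ‖F p - F q‖ := by
  rcases (norm_nonneg (p - q)).eq_or_lt with hpq | hpq
  · rw [← hpq, mul_zero]
    exact norm_nonneg _
  · have hcs : -⟪F p - F q, p - q⟫_ℝ ≤ ‖F p - F q‖ * ‖p - q‖ :=
      (neg_le_abs _).trans (abs_real_inner_le_norm _ _)
    refine le_of_mul_le_mul_right ?_ hpq
    nlinarith [hF p q]

theorem norm_sub_le_div_mul_dist_of_apply_eq {X : Type*} [PseudoMetricSpace X] {U : Set X} {Z : E → X → E}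
    {LZ γ : ℝ} (hγ : 0 < γ) (hLip : ∀ μ ∈ U, ∀ ν ∈ U, ∀ p : E, ‖Z p μ - Z p ν‖ ≤ LZ * dist μ ν)
    (hMono : ∀ μ ∈ U, ∀ p q : E, ⟪Z p μ - Z q μ, p - q⟫_ℝ ≤ -γ * ‖p - q‖ ^ 2)
    {μ ν : X} (hμ : μ ∈ U) (hν : ν ∈ U) {p q : E} (hZ : Z p μ = Z q ν) :
    ‖p - q‖ ≤ LZ / γ * dist μ ν := by
  rw [div_mul_eq_mul_div, le_div_iff₀' hγ]
  calc γ * ‖p - q‖ ≤ ‖Z p μ - Z q μ‖ := mul_norm_sub_le_norm_sub_of_inner_le_neg (hMono μ hμ) p q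
    _ = ‖Z q ν - Z q μ‖ := by rw [hZ]
    _ ≤ LZ * dist μ ν := by rw [dist_comm]; exact hLip ν hν μ hμ q

end InnerProductSpace

theorem welfare_sensitivity_bound_general
    {E X : Type*} [NormedAddCommGroup E] [InnerProductSpace ℝ E] [MetricSpace X]
    (U : Set X) (Z : E → X → E) (LZ γ : ℝ) (hγ : 0 < γ)
    (hLip : ∀ μ ∈ U, ∀ ν ∈ U, ∀ p : E, ‖Z p μ - Z p ν‖ ≤ LZ * dist μ ν)
    (hMono : ∀ μ ∈ U, ∀ p q : E, ⟪Z p μ - Z q μ, p - q⟫_ℝ ≤ -γ * ‖p - q‖ ^ 2)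
    (W : E → ℝ) (L : ℝ) (hL : 0 < L)
    (hW : ∀ p q : E, |W p - W q| ≤ L * ‖p - q‖) :
    ∀ μ ∈ U, ∀ ν ∈ U, ∀ p q : E, Z p μ = Z q ν →
      W q - W p ≤ (L * LZ / γ) * dist μ ν := by
  intro μ hμ ν hν p q hZ
  calc W q - W p ≤ L * ‖q - p‖ := (le_abs_self _).trans (hW q p)
    _ = L * ‖p - q‖ := by rw [norm_sub_rev]
    _ ≤ L * (LZ / γ * dist μ ν) :=
      mul_le_mul_of_nonneg_left (norm_sub_le_div_mul_dist_of_apply_eq hγ hLip hMono hμ hν hZ) hL.le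
    _ = L * LZ / γ * dist μ ν := by ring

/-- Local welfare sensitivity bound (Proposition 5): Sybil-proofness at rate α with
constant C = L·L_Z/γ, combining the Lipschitz price response with Lipschitz
principal utilities. -/
theorem welfare_sensitivity_bound
    {E X : Type*} [NormedAddCommGroup E] [InnerProductSpace ℝ E] [MetricSpace X]
    (U : Set X) (Z : E → X → E) (LZ γ : ℝ) (hLZ : 0 < LZ) (hγ : 0 < γ)
    (hLip : ∀ μ ∈ U, ∀ ν ∈ U, ∀ p : E, ‖Z p μ - Z p ν‖ ≤ LZ * dist μ ν)
    (hMono : ∀ μ ∈ U, ∀ p q : E, ⟪Z p μ - Z q μ, p - q⟫_ℝ ≤ -γ * ‖p - q‖ ^ 2)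
    (W : E → ℝ) (L : ℝ) (hL : 0 < L)
    (hW : ∀ p q : E, |W p - W q| ≤ L * ‖p - q‖) :
    ∀ μ ∈ U, ∀ ν ∈ U, ∀ p q : E, Z p μ = Z q ν →
      W q - W p ≤ (L * LZ / γ) * dist μ ν :=
  welfare_sensitivity_bound_general U Z LZ γ hγ hLip hMono W L hL hW
end
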